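/- Let G be a finite multigraph with vertex set V, edge set E, and incidence map ends : E → Sym2(V), where the degree of a vertex counts edge-ends with loops counted twice. Let N ⊆ V be a distinguished set of vertices with |N| ≥ 2, suppose every vertex of V not in N has degree exactly 1, and suppose in addition that every vertex of N has degree at least 3. Let δ be a natural number such that |E| ≤ δ + |N|. Then there exists a vertex v ∈ N with 2·deg(v) ≤ 2·δ + 4 − |V \ N|; that is, the minimum degree j over N satisfies j ≤ δ + 2 − |V \ N|/2. -/
import Mathlib


/-- The number of ends of a single edge (with unordered endpoint pair `p`) at the
vertex `v`: a loop at `v` contributes `2`, a non-loop edge incident to `v`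
contributes `1`, and an edge not incident to `v` contributes `0`. -/
def Sym2.endCount {V : Type*} [DecidableEq V] (p : Sym2 V) (v : V) : ℕ :=
  Sym2.lift ⟨fun a b => (if a = v then 1 else 0) + (if b = v then 1 else 0),
    fun a b => add_comm _ _⟩ p

/-- The degree of a vertex `v` in a finite multigraph given by an incidence map
`ends : E → Sym2 V`: the total number of edge-ends at `v`, loops counted twice. -/
def multigraphDegree {V E : Type*} [Fintype E] [DecidableEq V]
    (ends : E → Sym2 V) (v : V) : ℕ :=
  ∑ e : E, (ends e).endCount v

lemma sym2_endCount_sum {V : Type*} [Fintype V] [DecidableEq V] (p : Sym2 V) :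
    ∑ v : V, p.endCount v = 2 := by
  induction p using Sym2.inductionOn with
  | hf a b =>
    simp [Sym2.endCount, Finset.sum_add_distrib, eq_comm]

lemma multigraph_handshake {V E : Type*} [Fintype V] [Fintype E] [DecidableEq V]
    (ends : E → Sym2 V) :
    ∑ v : V, multigraphDegree ends v = 2 * Fintype.card E := by
  simp only [multigraphDegree]
  rw [Finset.sum_comm]
  rw [Finset.sum_congr rfl fun (e : E) _ => sym2_endCount_sum (ends e)]
  rw [Finset.sum_const, Finset.card_univ, smul_eq_mul, mul_comm]

/-- If `N` is a set of at least two vertices of a finite multigraph, every vertex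
outside `N` has degree exactly `1`, every vertex of `N` has degree at least `3`,
and `|E| ≤ δ + |N|`, then some vertex `v ∈ N` satisfies
`2 deg(v) ≤ 2δ + 4 - |V \ N|`. -/
theorem multigraph_exists_low_degree_vertex_refined {V E : Type*} [Fintype V]
    [Fintype E] [DecidableEq V] (ends : E → Sym2 V) (N : Finset V)
    (hN : 2 ≤ N.card)
    (hout : ∀ v : V, v ∉ N → multigraphDegree ends v = 1)
    (hin : ∀ v ∈ N, 3 ≤ multigraphDegree ends v)
    (δ : ℕ) (hE : Fintype.card E ≤ δ + N.card) :
    ∃ v ∈ N, (2 * multigraphDegree ends v : ℤ)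
        ≤ 2 * (δ : ℤ) + 4 - (Nᶜ.card : ℤ) := by
  obtain ⟨v, hv, hmin⟩ := N.exists_min_image (multigraphDegree ends)
    (Finset.card_pos.mp (by omega))
  refine ⟨v, hv, ?_⟩
  have hsplit : ∑ w : V, multigraphDegree ends w
      = (∑ w ∈ N, multigraphDegree ends w) + Nᶜ.card := by
    rw [← Finset.sum_add_sum_compl N]
    congr 1
    rw [Finset.card_eq_sum_ones]
    exact Finset.sum_congr rfl fun w hw => hout w (by simpa using hw)
  have hsum : ∑ w ∈ N, multigraphDegree ends w + Nᶜ.card = 2 * Fintype.card E := by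
    rw [← hsplit, multigraph_handshake]
  have hlow : N.card * multigraphDegree ends v ≤ ∑ w ∈ N, multigraphDegree ends w := by
    calc N.card * multigraphDegree ends v = ∑ _w ∈ N, multigraphDegree ends v := by
          rw [Finset.sum_const, smul_eq_mul]
      _ ≤ _ := Finset.sum_le_sum fun w hw => hmin w hw
  -- arithmetic: n * d + c ≤ 2δ + 2n, d ≥ 3, n ≥ 2 ⇒ 2d ≤ 2δ + 4 - c
  have hd := hin v hv
  set d := multigraphDegree ends v
  set n := N.card
  set c := Nᶜ.card
  have key : n * d + c ≤ 2 * δ + 2 * n := by omega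
  -- n*(d-2) ≤ 2δ - c, and 2 ≤ n, 1 ≤ d-2 ⇒ 2*(d-2) ≤ n*(d-2)
  have h2 : 2 * (d - 2) ≤ n * (d - 2) := Nat.mul_le_mul_right _ hN
  have h3 : n * (d - 2) + c ≤ 2 * δ := by
    have : n * (d - 2) + n * 2 = n * d := by
      rw [← Nat.mul_add]; congr 1; omega
    omega
  have : 2 * d + c ≤ 2 * δ + 4 := by omega
  push_cast
  omega
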